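/- If T is an S-consistent theory (S ∉ T) in ST^H, then there exists a prime, S-consistent theory T′ with T ⊆ T′. -/

import Mathlib

mutual
/-- Terms over the Henkin expansion of a first-order signature: variables,
function symbols applied to lists of terms, and Henkin witness constants
`w(∀x φ)` and `w(∃x φ)`. -/
inductive HTerm : Type
  | var : ℕ → HTerm
  | func : ℕ → List HTerm → HTerm
  | wAll : ℕ → HForm → HTerm
  | wEx : ℕ → HForm → HTerm
/-- Formulas over the Henkin expansion of a first-order signature. -/
inductive HForm : Type
  | rel : ℕ → List HTerm → HForm
  | neg : HForm → HForm
  | conj : HForm → HForm → HForm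
  | disj : HForm → HForm → HForm
  | all : ℕ → HForm → HForm
  | ex : ℕ → HForm → HForm
end

mutual
/-- Substitution of a term for a variable in a Henkin term. -/
def HTerm.subst (x : ℕ) (t : HTerm) : HTerm → HTerm
  | .var y => if y = x then t else .var y
  | .func f ts => .func f (ts.attach.map (fun s => HTerm.subst x t s.1))
  | .wAll y φ => .wAll y (if y = x then φ else HForm.subst x t φ)
  | .wEx y φ => .wEx y (if y = x then φ else HForm.subst x t φ)
termination_by s => sizeOf s
decreasing_by
  all_goals simp_wf
  all_goals first
    | (have := List.sizeOf_lt_of_mem s.2; omega)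
    | omega
/-- Substitution of a term for a variable in a Henkin formula
(not substituting under a binder for the same variable). -/
def HForm.subst (x : ℕ) (t : HTerm) : HForm → HForm
  | .rel r ts => .rel r (ts.attach.map (fun s => HTerm.subst x t s.1))
  | .neg φ => .neg (HForm.subst x t φ)
  | .conj φ ψ => .conj (HForm.subst x t φ) (HForm.subst x t ψ)
  | .disj φ ψ => .disj (HForm.subst x t φ) (HForm.subst x t ψ)
  | .all y φ => .all y (if y = x then φ else HForm.subst x t φ)
  | .ex y φ => .ex y (if y = x then φ else HForm.subst x t φ)
termination_by φ => sizeOf φ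
decreasing_by
  all_goals simp_wf
  all_goals first
    | (have := List.sizeOf_lt_of_mem s.2; omega)
    | omega
end

noncomputable instance : DecidableEq HForm := Classical.decEq _

/-- A sequent: a pair of finite sets of Henkin formulas. -/
abbrev HSeq : Type := Finset HForm × Finset HForm

/-- Componentwise union of sequents. -/
noncomputable def HSeq.squnion (S₁ S₂ : HSeq) : HSeq := (S₁.1 ∪ S₂.1, S₁.2 ∪ S₂.2)

/-- Derivability in the calculus `ST^H`: identity, weakening, invertible rules
for the connectives, witness introduction/elimination rules for the Henkin
constants, and the (invertible) quantifier rules via Henkin witnesses. -/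
inductive STH (X : Set HSeq) : HSeq → Prop
  | hyp {S} : S ∈ X → STH X S
  | id (φ : HForm) : STH X ({φ}, {φ})
  | wl {Γ Δ} (φ) : STH X (Γ, Δ) → STH X (insert φ Γ, Δ)
  | wr {Γ Δ} (φ) : STH X (Γ, Δ) → STH X (Γ, insert φ Δ)
  | andL {Γ Δ φ ψ} : STH X (insert φ (insert ψ Γ), Δ) → STH X (insert (.conj φ ψ) Γ, Δ)
  | andLinv {Γ Δ φ ψ} : STH X (insert (.conj φ ψ) Γ, Δ) → STH X (insert φ (insert ψ Γ), Δ)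
  | andR {Γ Δ φ ψ} : STH X (Γ, insert φ Δ) → STH X (Γ, insert ψ Δ) →
      STH X (Γ, insert (.conj φ ψ) Δ)
  | andRinv₁ {Γ Δ φ ψ} : STH X (Γ, insert (.conj φ ψ) Δ) → STH X (Γ, insert φ Δ)
  | andRinv₂ {Γ Δ φ ψ} : STH X (Γ, insert (.conj φ ψ) Δ) → STH X (Γ, insert ψ Δ)
  | orR {Γ Δ φ ψ} : STH X (Γ, insert φ (insert ψ Δ)) → STH X (Γ, insert (.disj φ ψ) Δ)
  | orRinv {Γ Δ φ ψ} : STH X (Γ, insert (.disj φ ψ) Δ) → STH X (Γ, insert φ (insert ψ Δ))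
  | orL {Γ Δ φ ψ} : STH X (insert φ Γ, Δ) → STH X (insert ψ Γ, Δ) →
      STH X (insert (.disj φ ψ) Γ, Δ)
  | orLinv₁ {Γ Δ φ ψ} : STH X (insert (.disj φ ψ) Γ, Δ) → STH X (insert φ Γ, Δ)
  | orLinv₂ {Γ Δ φ ψ} : STH X (insert (.disj φ ψ) Γ, Δ) → STH X (insert ψ Γ, Δ)
  | negL {Γ Δ φ} : STH X (Γ, insert φ Δ) → STH X (insert (.neg φ) Γ, Δ)
  | negLinv {Γ Δ φ} : STH X (insert (.neg φ) Γ, Δ) → STH X (Γ, insert φ Δ)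
  | negR {Γ Δ φ} : STH X (insert φ Γ, Δ) → STH X (Γ, insert (.neg φ) Δ)
  | negRinv {Γ Δ φ} : STH X (Γ, insert (.neg φ) Δ) → STH X (insert φ Γ, Δ)
  | uwi {Γ Δ} {φ : HForm} {x : ℕ} (t : HTerm) : STH X (insert (φ.subst x t) Γ, Δ) →
      STH X (insert (φ.subst x (.wAll x φ)) Γ, Δ)
  | ewi {Γ Δ} {φ : HForm} {x : ℕ} (t : HTerm) : STH X (Γ, insert (φ.subst x t) Δ) →
      STH X (Γ, insert (φ.subst x (.wEx x φ)) Δ)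
  | ewe {Γ Δ} {φ : HForm} {x : ℕ} (t : HTerm) : STH X (insert (φ.subst x (.wEx x φ)) Γ, Δ) →
      STH X (insert (φ.subst x t) Γ, Δ)
  | uwe {Γ Δ} {φ : HForm} {x : ℕ} (t : HTerm) : STH X (Γ, insert (φ.subst x (.wAll x φ)) Δ) →
      STH X (Γ, insert (φ.subst x t) Δ)
  | allLW {Γ Δ} {φ : HForm} {x : ℕ} : STH X (insert (φ.subst x (.wAll x φ)) Γ, Δ) →
      STH X (insert (.all x φ) Γ, Δ)
  | allLWinv {Γ Δ} {φ : HForm} {x : ℕ} : STH X (insert (.all x φ) Γ, Δ) →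
      STH X (insert (φ.subst x (.wAll x φ)) Γ, Δ)
  | allRW {Γ Δ} {φ : HForm} {x : ℕ} : STH X (Γ, insert (φ.subst x (.wAll x φ)) Δ) →
      STH X (Γ, insert (.all x φ) Δ)
  | allRWinv {Γ Δ} {φ : HForm} {x : ℕ} : STH X (Γ, insert (.all x φ) Δ) →
      STH X (Γ, insert (φ.subst x (.wAll x φ)) Δ)
  | exLW {Γ Δ} {φ : HForm} {x : ℕ} : STH X (insert (φ.subst x (.wEx x φ)) Γ, Δ) →
      STH X (insert (.ex x φ) Γ, Δ)
  | exLWinv {Γ Δ} {φ : HForm} {x : ℕ} : STH X (insert (.ex x φ) Γ, Δ) →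
      STH X (insert (φ.subst x (.wEx x φ)) Γ, Δ)
  | exRW {Γ Δ} {φ : HForm} {x : ℕ} : STH X (Γ, insert (φ.subst x (.wEx x φ)) Δ) →
      STH X (Γ, insert (.ex x φ) Δ)
  | exRWinv {Γ Δ} {φ : HForm} {x : ℕ} : STH X (Γ, insert (.ex x φ) Δ) →
      STH X (Γ, insert (φ.subst x (.wEx x φ)) Δ)

/-- An `ST^H`-theory: a set of sequents closed under derivability. -/
def IsTheory (T : Set HSeq) : Prop := ∀ S, STH T S → S ∈ T

/-- A prime theory: `Γ ▷ Δ ∈ T` with `Γ ∪ Δ ≠ ∅` implies `γ ▷ ∅ ∈ T` for some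
`γ ∈ Γ` or `∅ ▷ δ ∈ T` for some `δ ∈ Δ`. -/
def IsPrime (T : Set HSeq) : Prop :=
  ∀ Γ Δ : Finset HForm, (Γ, Δ) ∈ T → (Γ ∪ Δ).Nonempty →
    (∃ γ ∈ Γ, (({γ} : Finset HForm), (∅ : Finset HForm)) ∈ T) ∨
    (∃ δ ∈ Δ, ((∅ : Finset HForm), ({δ} : Finset HForm)) ∈ T)

lemma STH.weakenUnion {X : Set HSeq} {Γ Δ : Finset HForm} (A B : Finset HForm)
    (h : STH X (Γ, Δ)) : STH X (Γ ∪ A, Δ ∪ B) := by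
  classical
  induction A using Finset.induction_on with
  | empty =>
    rw [Finset.union_empty]
    induction B using Finset.induction_on with
    | empty => rw [Finset.union_empty]; exact h
    | insert _ _ _ ih => rw [Finset.union_insert]; exact .wr _ ih
  | insert _ _ _ ih => rw [Finset.union_insert]; exact .wl _ ih

lemma STH.mapUnion {X Y : Set HSeq} (A B : Finset HForm)
    (hmap : ∀ U ∈ X, STH Y (U.1 ∪ A, U.2 ∪ B)) :
    ∀ {U : HSeq}, STH X U → STH Y (U.1 ∪ A, U.2 ∪ B) := by
  intro U h
  induction h with
  | hyp hU => exact hmap _ hU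
  | id φ => exact STH.weakenUnion A B (.id φ)
  | wl φ _ ih => simp only [Finset.insert_union] at ih ⊢; exact .wl φ ih
  | wr φ _ ih => simp only [Finset.insert_union] at ih ⊢; exact .wr φ ih
  | andL _ ih => simp only [Finset.insert_union] at ih ⊢; exact .andL ih
  | andLinv _ ih => simp only [Finset.insert_union] at ih ⊢; exact .andLinv ih
  | andR _ _ ih₁ ih₂ => simp only [Finset.insert_union] at ih₁ ih₂ ⊢; exact .andR ih₁ ih₂
  | andRinv₁ _ ih => simp only [Finset.insert_union] at ih ⊢; exact .andRinv₁ ih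
  | andRinv₂ _ ih => simp only [Finset.insert_union] at ih ⊢; exact .andRinv₂ ih
  | orR _ ih => simp only [Finset.insert_union] at ih ⊢; exact .orR ih
  | orRinv _ ih => simp only [Finset.insert_union] at ih ⊢; exact .orRinv ih
  | orL _ _ ih₁ ih₂ => simp only [Finset.insert_union] at ih₁ ih₂ ⊢; exact .orL ih₁ ih₂
  | orLinv₁ _ ih => simp only [Finset.insert_union] at ih ⊢; exact .orLinv₁ ih
  | orLinv₂ _ ih => simp only [Finset.insert_union] at ih ⊢; exact .orLinv₂ ih
  | negL _ ih => simp only [Finset.insert_union] at ih ⊢; exact .negL ih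
  | negLinv _ ih => simp only [Finset.insert_union] at ih ⊢; exact .negLinv ih
  | negR _ ih => simp only [Finset.insert_union] at ih ⊢; exact .negR ih
  | negRinv _ ih => simp only [Finset.insert_union] at ih ⊢; exact .negRinv ih
  | uwi t _ ih => simp only [Finset.insert_union] at ih ⊢; exact .uwi t ih
  | ewi t _ ih => simp only [Finset.insert_union] at ih ⊢; exact .ewi t ih
  | ewe t _ ih => simp only [Finset.insert_union] at ih ⊢; exact .ewe t ih
  | uwe t _ ih => simp only [Finset.insert_union] at ih ⊢; exact .uwe t ih
  | allLW _ ih => simp only [Finset.insert_union] at ih ⊢; exact .allLW ih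
  | allLWinv _ ih => simp only [Finset.insert_union] at ih ⊢; exact .allLWinv ih
  | allRW _ ih => simp only [Finset.insert_union] at ih ⊢; exact .allRW ih
  | allRWinv _ ih => simp only [Finset.insert_union] at ih ⊢; exact .allRWinv ih
  | exLW _ ih => simp only [Finset.insert_union] at ih ⊢; exact .exLW ih
  | exLWinv _ ih => simp only [Finset.insert_union] at ih ⊢; exact .exLWinv ih
  | exRW _ ih => simp only [Finset.insert_union] at ih ⊢; exact .exRW ih
  | exRWinv _ ih => simp only [Finset.insert_union] at ih ⊢; exact .exRWinv ih

lemma STH.mono {X Y : Set HSeq} (hXY : X ⊆ Y) {U : HSeq} (h : STH X U) : STH Y U := by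
  have := STH.mapUnion (X := X) (Y := Y) ∅ ∅ (fun V hV => by
    simpa using STH.hyp (X := Y) (hXY hV)) h
  simpa using this

lemma STH.of_chain {C : Set (Set HSeq)} (hC : IsChain (· ⊆ ·) C) {c₀ : Set HSeq}
    (hc₀ : c₀ ∈ C) {U : HSeq} (h : STH (⋃₀ C) U) : ∃ c ∈ C, STH c U := by
  induction h with
  | hyp hU => obtain ⟨c, hc, hUc⟩ := hU; exact ⟨c, hc, .hyp hUc⟩
  | id φ => exact ⟨c₀, hc₀, .id φ⟩
  | andR _ _ ih₁ ih₂ =>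
    obtain ⟨c, hc, h₁⟩ := ih₁; obtain ⟨d, hd, h₂⟩ := ih₂
    rcases hC.total hc hd with hcd | hdc
    · exact ⟨d, hd, .andR (h₁.mono hcd) h₂⟩
    · exact ⟨c, hc, .andR h₁ (h₂.mono hdc)⟩
  | orL _ _ ih₁ ih₂ =>
    obtain ⟨c, hc, h₁⟩ := ih₁; obtain ⟨d, hd, h₂⟩ := ih₂
    rcases hC.total hc hd with hcd | hdc
    · exact ⟨d, hd, .orL (h₁.mono hcd) h₂⟩
    · exact ⟨c, hc, .orL h₁ (h₂.mono hdc)⟩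
  | wl φ _ ih => obtain ⟨c, hc, h'⟩ := ih; exact ⟨c, hc, .wl φ h'⟩
  | wr φ _ ih => obtain ⟨c, hc, h'⟩ := ih; exact ⟨c, hc, .wr φ h'⟩
  | andL _ ih => obtain ⟨c, hc, h'⟩ := ih; exact ⟨c, hc, .andL h'⟩
  | andLinv _ ih => obtain ⟨c, hc, h'⟩ := ih; exact ⟨c, hc, .andLinv h'⟩
  | andRinv₁ _ ih => obtain ⟨c, hc, h'⟩ := ih; exact ⟨c, hc, .andRinv₁ h'⟩
  | andRinv₂ _ ih => obtain ⟨c, hc, h'⟩ := ih; exact ⟨c, hc, .andRinv₂ h'⟩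
  | orR _ ih => obtain ⟨c, hc, h'⟩ := ih; exact ⟨c, hc, .orR h'⟩
  | orRinv _ ih => obtain ⟨c, hc, h'⟩ := ih; exact ⟨c, hc, .orRinv h'⟩
  | orLinv₁ _ ih => obtain ⟨c, hc, h'⟩ := ih; exact ⟨c, hc, .orLinv₁ h'⟩
  | orLinv₂ _ ih => obtain ⟨c, hc, h'⟩ := ih; exact ⟨c, hc, .orLinv₂ h'⟩
  | negL _ ih => obtain ⟨c, hc, h'⟩ := ih; exact ⟨c, hc, .negL h'⟩
  | negLinv _ ih => obtain ⟨c, hc, h'⟩ := ih; exact ⟨c, hc, .negLinv h'⟩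
  | negR _ ih => obtain ⟨c, hc, h'⟩ := ih; exact ⟨c, hc, .negR h'⟩
  | negRinv _ ih => obtain ⟨c, hc, h'⟩ := ih; exact ⟨c, hc, .negRinv h'⟩
  | uwi t _ ih => obtain ⟨c, hc, h'⟩ := ih; exact ⟨c, hc, .uwi t h'⟩
  | ewi t _ ih => obtain ⟨c, hc, h'⟩ := ih; exact ⟨c, hc, .ewi t h'⟩
  | ewe t _ ih => obtain ⟨c, hc, h'⟩ := ih; exact ⟨c, hc, .ewe t h'⟩
  | uwe t _ ih => obtain ⟨c, hc, h'⟩ := ih; exact ⟨c, hc, .uwe t h'⟩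
  | allLW _ ih => obtain ⟨c, hc, h'⟩ := ih; exact ⟨c, hc, .allLW h'⟩
  | allLWinv _ ih => obtain ⟨c, hc, h'⟩ := ih; exact ⟨c, hc, .allLWinv h'⟩
  | allRW _ ih => obtain ⟨c, hc, h'⟩ := ih; exact ⟨c, hc, .allRW h'⟩
  | allRWinv _ ih => obtain ⟨c, hc, h'⟩ := ih; exact ⟨c, hc, .allRWinv h'⟩
  | exLW _ ih => obtain ⟨c, hc, h'⟩ := ih; exact ⟨c, hc, .exLW h'⟩
  | exLWinv _ ih => obtain ⟨c, hc, h'⟩ := ih; exact ⟨c, hc, .exLWinv h'⟩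
  | exRW _ ih => obtain ⟨c, hc, h'⟩ := ih; exact ⟨c, hc, .exRW h'⟩
  | exRWinv _ ih => obtain ⟨c, hc, h'⟩ := ih; exact ⟨c, hc, .exRWinv h'⟩

/-- Every `S`-consistent theory extends to a prime `S`-consistent theory. -/
theorem exists_prime_sConsistent_extension (T : Set HSeq) (hT : IsTheory T)
    (S : HSeq) (hS : S ∉ T) :
    ∃ T' : Set HSeq, IsTheory T' ∧ IsPrime T' ∧ S ∉ T' ∧ T ⊆ T' := by
  classical
  -- Zorn's lemma on the family of `S`-consistent theories extending `T`
  obtain ⟨M, hTM, hMmax⟩ := zorn_subset_nonempty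
      {N : Set HSeq | IsTheory N ∧ T ⊆ N ∧ S ∉ N}
      (by
        intro c hcsub hchain hcne
        obtain ⟨c₀, hc₀⟩ := hcne
        refine ⟨⋃₀ c, ⟨?_, ?_, ?_⟩, fun s hs => Set.subset_sUnion_of_mem hs⟩
        · intro U hU
          obtain ⟨d, hd, hUd⟩ := STH.of_chain hchain hc₀ hU
          exact Set.mem_sUnion.2 ⟨d, hd, (hcsub hd).1 _ hUd⟩
        · exact (hcsub hc₀).2.1.trans (Set.subset_sUnion_of_mem hc₀)
        · rintro ⟨d, hd, hSd⟩
          exact (hcsub hd).2.2 hSd)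
      T ⟨hT, subset_rfl, hS⟩
  obtain ⟨hMth, hTM', hSM⟩ := hMmax.prop
  -- the transformed theories `N A B`
  set N : Finset HForm → Finset HForm → Set HSeq :=
    fun A B => {U : HSeq | (U.1 ∪ A, U.2 ∪ B) ∈ M} with hN
  have hNth : ∀ A B, IsTheory (N A B) := by
    intro A B U hU
    exact hMth _ (STH.mapUnion A B (fun V hV => STH.hyp hV) hU)
  have hMN : ∀ A B, M ⊆ N A B := by
    intro A B U hU
    exact hMth _ (STH.weakenUnion A B (STH.hyp hU))
  have hdich : ∀ A B, S ∈ N A B ∨ N A B = M := by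
    intro A B
    by_cases hs : S ∈ N A B
    · exact Or.inl hs
    · refine Or.inr (subset_antisymm ?_ (hMN A B))
      exact hMmax.2 ⟨hNth A B, hTM'.trans (hMN A B), hs⟩ (hMN A B)
  -- S-translates can be cancelled
  have hF : ∀ U : HSeq, (U.1 ∪ S.1, U.2 ∪ S.2) ∈ M → U ∈ M := by
    have : N S.1 S.2 = M := by
      rcases hdich S.1 S.2 with hs | heq
      · exfalso
        apply hSM
        have : (S.1 ∪ S.1, S.2 ∪ S.2) ∈ M := hs
        rwa [Finset.union_self, Finset.union_self] at this
      · exact heq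
    intro U hU
    rw [← this]; exact hU
  refine ⟨M, hMth, ?_, hSM, hTM⟩
  intro Γ Δ hΓΔ _
  by_contra hcon
  rw [not_or] at hcon
  obtain ⟨h1, h2⟩ := hcon
  push_neg at h1 h2
  -- every γ ∈ Γ is left-cancellable
  have hLC : ∀ γ ∈ Γ, ∀ U : HSeq, (U.1 ∪ {γ}, U.2) ∈ M → U ∈ M := by
    intro γ hγ
    rcases hdich {γ} ∅ with hs | heq
    · exfalso
      apply h1 γ hγ
      apply hF ({γ}, ∅)
      have : (S.1 ∪ {γ}, S.2 ∪ ∅) ∈ M := hs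
      rw [Finset.union_empty] at this
      rwa [Finset.union_comm, Finset.empty_union]
    · intro U hU
      rw [← heq]
      show (U.1 ∪ {γ}, U.2 ∪ ∅) ∈ M
      rwa [Finset.union_empty]
  -- every δ ∈ Δ is right-cancellable
  have hRC : ∀ δ ∈ Δ, ∀ U : HSeq, (U.1, U.2 ∪ {δ}) ∈ M → U ∈ M := by
    intro δ hδ
    rcases hdich ∅ {δ} with hs | heq
    · exfalso
      apply h2 δ hδ
      apply hF (∅, {δ})
      have : (S.1 ∪ ∅, S.2 ∪ {δ}) ∈ M := hs
      rw [Finset.union_empty] at this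
      rwa [Finset.empty_union, Finset.union_comm]
    · intro U hU
      rw [← heq]
      show (U.1 ∪ ∅, U.2 ∪ {δ}) ∈ M
      rwa [Finset.union_empty]
  -- peel off Γ on the left
  have hpeel1 : ∀ A : Finset HForm,
      (∀ γ ∈ A, ∀ U : HSeq, (U.1 ∪ {γ}, U.2) ∈ M → U ∈ M) →
      ∀ B : Finset HForm, (A, B) ∈ M → ((∅ : Finset HForm), B) ∈ M := by
    intro A
    induction A using Finset.induction_on with
    | empty => intro _ B h; exact h
    | insert _ _ ha ih =>
      rename_i a A'
      intro hc B h
      have hA' : (A', B) ∈ M := by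
        apply hc a (Finset.mem_insert_self a A') (A', B)
        show (A' ∪ {a}, B) ∈ M
        rwa [Finset.union_comm, ← Finset.insert_eq]
      exact ih (fun γ hγ => hc γ (Finset.mem_insert_of_mem hγ)) B hA'
  have hpeel2 : ∀ B : Finset HForm,
      (∀ δ ∈ B, ∀ U : HSeq, (U.1, U.2 ∪ {δ}) ∈ M → U ∈ M) →
      (((∅ : Finset HForm), B) ∈ M) → ((∅ : Finset HForm), (∅ : Finset HForm)) ∈ M := by
    intro B
    induction B using Finset.induction_on with
    | empty => intro _ h; exact h
    | insert _ _ hb ih =>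
      rename_i b B'
      intro hc h
      have hB' : ((∅ : Finset HForm), B') ∈ M := by
        apply hc b (Finset.mem_insert_self b B') (∅, B')
        show ((∅ : Finset HForm), B' ∪ {b}) ∈ M
        rwa [Finset.union_comm, ← Finset.insert_eq]
      exact ih (fun δ hδ => hc δ (Finset.mem_insert_of_mem hδ)) hB'
  have h00 : ((∅ : Finset HForm), (∅ : Finset HForm)) ∈ M :=
    hpeel2 Δ hRC (hpeel1 Γ hLC Δ hΓΔ)
  -- but then S ∈ M by weakening, contradiction
  apply hSM
  have := hMth _ (STH.weakenUnion S.1 S.2 (STH.hyp h00))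
  rwa [Finset.empty_union, Finset.empty_union] at this
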